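/- For any tree T, the independence complex of the generic graph G_T is strongly shellable; together with G_T being ESS, this shows G_T is bi-strongly shellable. -/

import Mathlib

/-!
An arrow `i → k` (the vertex `x_{i,k}` of `G_T`) lies in the out-tree orientation `A_v` when `k`
is farther from `v` than `i`. Every arrow outside `A_v` is adjacent in `G_T` to its reverse, which
lies in `A_v`, so each `A_v` is a maximal independent set. Conversely, an independent set `s`
never contains an arrow together with its reverse, so it has fewer arrows than `T` has vertices,
and no two of its arrows share a head; hence some vertex `v` is the head of none of them. If `s`
is maximal and an arrow `i → k` of `s` points towards `v`, then the arrow leaving `k` towards `v`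
is in `s` too (an arrow of `s` adjacent to it would also be adjacent to `i → k`); following these
arrows would reach an arrow with head `v`. So `s ⊆ A_v`, and `s = A_v`.
Listing the vertices by distance from a root `r`, `A_w` is preceded by `A_p` for the parent `p`
of `w`, and `A_w \ A_p` is the single arrow `w → p`.

The edges of `G_T` are the pairs `{x → x', y → y'}` for `x ≠ y`, where `x'` and `y'` are the first
steps of the path between `x` and `y`. List them by decreasing depth of the deeper endpoint. An
earlier edge meeting a later one differs from it in one arrow. If an earlier edge `{u, a}` is
disjoint from a later edge `{x, y}`, then `u` is deeper than `x` and `y`, and seen from `x` the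
vertex `u` lies behind `y`, or seen from `y` it lies behind `x`; accordingly the edge `{u, x}` or
`{u, y}` comes earlier and consists of one arrow of each.
-/
open scoped Classical

def StronglyShellable {α : Type*} [DecidableEq α] (F : Finset (Finset α)) : Prop :=
  ∃ l : List (Finset α), l.Nodup ∧ l.toFinset = F ∧
    ∀ i j : Fin l.length, (i : ℕ) < (j : ℕ) →
      ∃ k : Fin l.length, (k : ℕ) < (j : ℕ) ∧
        (l.get j \ l.get k).card = 1 ∧
        l.get i ∩ l.get j ⊆ l.get k ∧ l.get k ⊆ l.get i ∪ l.get j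

def edgeSets {V : Type*} [Fintype V] [DecidableEq V] (G : SimpleGraph V) [DecidableRel G.Adj] :
    Finset (Finset V) :=
  G.edgeFinset.image (Sym2.lift ⟨fun u v => ({u, v} : Finset V), fun u v => Finset.pair_comm u v⟩)

abbrev GenericVertex {V : Type*} (T : SimpleGraph V) : Type _ := {p : V × V // T.Adj p.1 p.2}

/-- The generic graph of a tree T: vertices are ordered pairs (i,k) with {i,k} ∈ E(T)
(representing x_{i,k}); x_{i,k} is adjacent to x_{j,l} iff on the unique path in T from i
to j, the second vertex is k and the second-to-last vertex is l. -/
def genericGraph {V : Type*} [DecidableEq V] (T : SimpleGraph V) : SimpleGraph (GenericVertex T) :=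
  SimpleGraph.fromRel fun a b =>
    ∃ w : T.Walk a.val.1 b.val.1, w.IsPath ∧ 0 < w.length ∧
      w.support[1]? = some a.val.2 ∧ w.support.reverse[1]? = some b.val.2

open Finset SimpleGraph

theorem stronglyShellable_image_of_rank {ι α β : Type*} [Fintype ι] [DecidableEq α]
    [LinearOrder β] {f : ι → Finset α} (hf : Function.Injective f) {ρ : ι → β}
    (hρ : Function.Injective ρ)
    (h : ∀ i j, ρ i < ρ j →
      ∃ k, ρ k < ρ j ∧ #(f j \ f k) = 1 ∧ f i ∩ f j ⊆ f k ∧ f k ⊆ f i ∪ f j) :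
    StronglyShellable (univ.image f) := by
  let _ : LinearOrder ι := LinearOrder.lift' ρ hρ
  set s := (univ : Finset ι).sort
  have hs : StrictMono s.get := (sortedLT_sort univ).strictMono_get
  have hlen : (s.map f).length = s.length := List.length_map _
  have hget (m : Fin (s.map f).length) : (s.map f).get m = f (s.get (m.cast hlen)) := by simp
  refine ⟨s.map f, (sort_nodup _ _).map hf, by ext; simp [s], ?_⟩
  intro i j hij
  obtain ⟨k, hk, hcard, hinter, hunion⟩ :=
    h (s.get (i.cast hlen)) (s.get (j.cast hlen)) (hs (by simpa using hij))
  obtain ⟨m, rfl⟩ := List.mem_iff_get.1 ((mem_sort (· ≤ ·)).2 (mem_univ k))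
  refine ⟨m.cast hlen.symm, ?_, ?_⟩
  · exact hs.lt_iff_lt.1 hk
  · simpa only [hget] using ⟨hcard, hinter, hunion⟩

lemma Finset.card_sdiff_eq_one_of_card_eq_two {α : Type*} [DecidableEq α] {s t : Finset α}
    (hs : #s = 2) (ht : #t = 2) (hne : s ≠ t) (hst : (s ∩ t).Nonempty) : #(t \ s) = 1 := by
  have hpos := hst.card_pos
  have hle : #(s ∩ t) ≤ #s := card_le_card inter_subset_left
  have hlt : #(s ∩ t) ≠ 2 := fun h2 => hne <|
    (eq_of_subset_of_card_le inter_subset_left (by omega)).symm.trans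
      (eq_of_subset_of_card_le inter_subset_right (by omega))
  rw [card_sdiff]
  omega

lemma exists_injective_rank {α : Type*} [Countable α] (d : α → ℕ) :
    ∃ ρ : α → ℕ ×ₗ ℕ, Function.Injective ρ ∧ ∀ a b, d a < d b → ρ a < ρ b := by
  obtain ⟨e, he⟩ := Countable.exists_injective_nat α
  refine ⟨fun v => toLex (d v, e v), fun u w h => he (congrArg Prod.snd (toLex_inj.1 h)),
    fun u w h => Prod.Lex.toLex_lt_toLex.2 (Or.inl h)⟩

namespace SimpleGraph

variable {V : Type*} {G : SimpleGraph V} {u v w x y z : V}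

-- The first step of the path from `x` to `y`, which is unique in a tree; `x` itself if `y = x`.
noncomputable def nextToward (G : SimpleGraph V) (x y : V) : V :=
  if h : G.Reachable x y then h.some.bypass.snd else x

lemma dist_add_dist_le_length (p : G.Walk u v) (hw : w ∈ p.support) :
    G.dist u w + G.dist w v ≤ p.length := by
  rw [← p.take_spec hw, Walk.length_append]
  exact add_le_add (dist_le _) (dist_le _)

namespace IsTree

lemma length_eq_dist (hG : G.IsTree) {p : G.Walk u v} (hp : p.IsPath) : p.length = G.dist u v := by
  obtain ⟨q, hq, hql⟩ := hG.connected.exists_path_of_dist u v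
  rw [← hql, Subtype.mk.inj ((hG.isAcyclic.subsingleton_path u v).elim ⟨p, hp⟩ ⟨q, hq⟩)]

lemma nextToward_eq_snd (hG : G.IsTree) {p : G.Walk x y} (hp : p.IsPath) :
    G.nextToward x y = p.snd := by
  have h : G.Reachable x y := ⟨p⟩
  have huniq := (hG.isAcyclic.subsingleton_path x y).elim ⟨_, h.some.bypass_isPath⟩ ⟨p, hp⟩
  rw [nextToward, dif_pos h, Subtype.mk.inj huniq]

lemma nextToward_self (hG : G.IsTree) (x : V) : G.nextToward x x = x :=
  hG.nextToward_eq_snd Walk.IsPath.nil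

lemma adj_nextToward (hG : G.IsTree) (h : x ≠ y) : G.Adj x (G.nextToward x y) := by
  obtain ⟨p, hp, -⟩ := hG.connected.exists_path_of_dist x y
  rw [hG.nextToward_eq_snd hp]
  exact p.adj_snd (Walk.not_nil_of_ne h)

lemma dist_nextToward_add_one (hG : G.IsTree) (h : x ≠ y) :
    G.dist y (G.nextToward x y) + 1 = G.dist y x := by
  obtain ⟨p, hp, -⟩ := hG.connected.exists_path_of_dist x y
  have hnil := Walk.not_nil_of_ne (p := p) h
  rw [hG.nextToward_eq_snd hp, dist_comm, ← hG.length_eq_dist hp.tail, dist_comm,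
    ← hG.length_eq_dist hp, p.length_tail_add_one hnil]

lemma eq_nextToward (hG : G.IsTree) (hz : G.Adj x z) (hd : G.dist y z + 1 = G.dist y x) :
    z = G.nextToward x y := by
  obtain ⟨q, hq, hql⟩ := hG.connected.exists_path_of_dist z y
  have hx : x ∉ q.support := fun hx => by
    have := dist_add_dist_le_length q hx
    rw [dist_eq_one_iff_adj.2 hz.symm] at this
    rw [dist_comm (u := y) (v := z), dist_comm (u := y) (v := x)] at hd
    omega
  rw [hG.nextToward_eq_snd (hq.cons hx (h := hz)), Walk.snd_cons]

lemma eq_nextToward_iff (hG : G.IsTree) (hz : G.Adj x z) :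
    z = G.nextToward x y ↔ G.dist y z < G.dist y x := by
  by_cases hxy : x = y
  · subst hxy
    rw [hG.nextToward_self, dist_self]
    exact iff_of_false hz.ne' (Nat.not_lt_zero _)
  constructor
  · rintro rfl
    have := hG.dist_nextToward_add_one hxy
    omega
  · intro hlt
    refine hG.eq_nextToward hz ?_
    rcases hG.dist_eq_dist_add_one_of_adj y hz with h | h <;> omega

lemma eq_of_adj_of_dist_lt (hG : G.IsTree) {a b x' : V} (hxx' : G.Adj x x') (hab : G.Adj a b)
    (hx : G.dist x a < G.dist x b) (hx' : G.dist x' b < G.dist x' a) : x = a ∧ x' = b := by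
  have hxb := hG.dist_eq_dist_add_one_of_adj x hab
  have hx'a := hG.dist_eq_dist_add_one_of_adj x' hab
  have hax := hG.dist_eq_dist_add_one_of_adj a hxx'
  have hbx := hG.dist_eq_dist_add_one_of_adj b hxx'
  have c1 := G.dist_comm (u := a) (v := x)
  have c2 := G.dist_comm (u := a) (v := x')
  have c3 := G.dist_comm (u := b) (v := x)
  have c4 := G.dist_comm (u := b) (v := x')
  by_cases hxa : x = a
  · subst hxa
    refine ⟨rfl, (hG.connected.dist_eq_zero_iff).1 ?_⟩
    rw [dist_self] at hx hax c1
    omega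
  · exfalso
    -- the first step from `x` towards `a` would also be the first step towards `b`, i.e. `x'`
    obtain ⟨p, hxp, hpa⟩ : ∃ p, G.Adj x p ∧ G.dist a p + 1 = G.dist a x :=
      ⟨_, hG.adj_nextToward hxa, hG.dist_nextToward_add_one hxa⟩
    have hpb : G.dist b p ≤ G.dist b a + G.dist a p := hG.connected.dist_triangle
    have hba : G.dist b a = 1 := dist_eq_one_iff_adj.2 hab.symm
    have hbp := hG.dist_eq_dist_add_one_of_adj b hxp
    have hp : p = G.nextToward x b := hG.eq_nextToward hxp (by omega)
    have hx'' : x' = G.nextToward x b := hG.eq_nextToward hxx' (by omega)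
    obtain rfl : p = x' := hp.trans hx''.symm
    omega

lemma dist_eq_of_dist_lt (hG : G.IsTree) {a b : V} (hab : G.Adj a b) :
    ∀ {x y : V}, G.dist x a < G.dist x b → G.dist y b < G.dist y a →
      G.dist x y = G.dist x a + 1 + G.dist y b := by
  suffices ∀ n x y, G.dist x y = n → G.dist x a < G.dist x b → G.dist y b < G.dist y a →
      G.dist x y = G.dist x a + 1 + G.dist y b from fun {x y} hx hy => this _ x y rfl hx hy
  intro n
  induction n using Nat.strong_induction_on with
  | _ n ih =>
  intro x y hn hx hy
  have hxy : x ≠ y := by rintro rfl; omega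
  obtain ⟨x', hxx', hx'y⟩ : ∃ x', G.Adj x x' ∧ G.dist y x' + 1 = G.dist y x :=
    ⟨_, hG.adj_nextToward hxy, hG.dist_nextToward_add_one hxy⟩
  have c1 := G.dist_comm (u := x) (v := y)
  have c2 := G.dist_comm (u := x') (v := y)
  have hyab := hG.dist_eq_dist_add_one_of_adj y hab
  rcases hG.dist_eq_dist_add_one_of_adj x' hab with h | h
  · obtain ⟨rfl, rfl⟩ := hG.eq_of_adj_of_dist_lt hxx' hab hx (by omega)
    rw [dist_self]
    omega
  · have := ih _ (by omega) x' y rfl (by omega) hy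
    have hxa : G.dist x a ≤ G.dist x x' + G.dist x' a := hG.connected.dist_triangle
    have hxy' : G.dist x y ≤ G.dist x a + G.dist a y := hG.connected.dist_triangle
    have hay : G.dist a y ≤ G.dist a b + G.dist b y := hG.connected.dist_triangle
    have := dist_eq_one_iff_adj.2 hxx'
    have := dist_eq_one_iff_adj.2 hab
    have := G.dist_comm (u := b) (v := y)
    have := G.dist_comm (u := a) (v := y)
    omega

lemma nextToward_eq_of_dist_le (hG : G.IsTree) {r c : V} (hyc : y ≠ c)
    (h : G.dist r y ≤ G.dist r c) : G.nextToward c y = G.nextToward c r := by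
  have hcr : c ≠ r := by
    rintro rfl
    exact hyc ((hG.connected.dist_eq_zero_iff).1 (by rw [dist_self] at h; omega)).symm
  have hcp := hG.adj_nextToward hcr
  have hrp := hG.dist_nextToward_add_one hcr
  refine ((hG.eq_nextToward_iff hcp).2 ?_).symm
  by_contra hle
  have hcross := hG.dist_eq_of_dist_lt hcp (x := y) (y := r)
    (by have := hG.dist_ne_of_adj y hcp; omega) (by omega)
  have hyc' : G.dist y c ≠ 0 := fun h0 => hyc ((hG.connected.dist_eq_zero_iff).1 h0)
  have := G.dist_comm (u := y) (v := r)
  omega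

lemma nextToward_eq_or (hG : G.IsTree) (hxy : x ≠ y) (u : V) :
    G.nextToward x u = G.nextToward x y ∨ G.nextToward y u = G.nextToward y x := by
  have hxx' := hG.adj_nextToward hxy
  rcases lt_or_gt_of_ne (hG.dist_ne_of_adj u hxx') with hu | hu
  · -- `u` lies on the side of `x`, so the path from `u` to `y` passes through `x`
    right
    have hyx' := hG.dist_nextToward_add_one hxy
    have hcross := hG.dist_eq_of_dist_lt hxx' hu (y := y) (by omega)
    have hyy' := hG.adj_nextToward hxy.symm
    have hxy' := hG.dist_nextToward_add_one hxy.symm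
    have htri : G.dist u (G.nextToward y x) ≤ G.dist u x + G.dist x (G.nextToward y x) :=
      hG.connected.dist_triangle
    have := G.dist_comm (u := x) (v := y)
    exact ((hG.eq_nextToward_iff hyy').2 (by omega)).symm
  · exact Or.inl ((hG.eq_nextToward_iff hxx').2 hu).symm

lemma exists_isPath_support_iff (hG : G.IsTree) {i j k l : V} :
    (∃ w : G.Walk i j, w.IsPath ∧ 0 < w.length ∧
        w.support[1]? = some k ∧ w.support.reverse[1]? = some l) ↔
      i ≠ j ∧ k = G.nextToward i j ∧ l = G.nextToward j i := by
  have hsnd {i j : V} (w : G.Walk i j) (hw : 0 < w.length) : w.support[1]? = some w.snd :=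
    (w.getVert_eq_support_getElem? hw).symm
  constructor
  · rintro ⟨w, hw, hlen, hk, hl⟩
    have hij : i ≠ j := by
      rintro rfl
      exact Walk.not_nil_iff_lt_length.2 hlen (Walk.isPath_iff_nil.1 hw)
    rw [← Walk.support_reverse, hsnd _ (by simpa using hlen)] at hl
    rw [hsnd w hlen] at hk
    exact ⟨hij, by rw [hG.nextToward_eq_snd hw, Option.some.inj hk],
      by rw [hG.nextToward_eq_snd hw.reverse, Option.some.inj hl]⟩
  · rintro ⟨hij, rfl, rfl⟩
    obtain ⟨w, hw, -⟩ := hG.connected.exists_path_of_dist i j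
    have hlen : 0 < w.length := Walk.not_nil_iff_lt_length.1 (Walk.not_nil_of_ne hij)
    refine ⟨w, hw, hlen, ?_, ?_⟩
    · rw [hsnd w hlen, hG.nextToward_eq_snd hw]
    · rw [← Walk.support_reverse, hsnd _ (by simpa using hlen), hG.nextToward_eq_snd hw.reverse]

end IsTree

def IsIndepFinset {α : Type*} (G : SimpleGraph α) (s : Finset α) : Prop :=
  ∀ a ∈ s, ∀ b ∈ s, ¬ G.Adj a b

lemma IsIndepFinset.exists_adj_of_maximal {α : Type*} [DecidableEq α] {G : SimpleGraph α}
    {s : Finset α} (hs : G.IsIndepFinset s) (hmax : ∀ t, G.IsIndepFinset t → s ⊆ t → s = t)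
    {z : α} (hz : z ∉ s) : ∃ x ∈ s, G.Adj x z := by
  by_contra! hnone
  refine hz ((hmax (insert z s) ?_ (subset_insert z s)).symm ▸ mem_insert_self z s)
  simp only [IsIndepFinset, mem_insert, forall_eq_or_imp]
  exact ⟨⟨G.loopless.irrefl z, fun b hb h => hnone b hb h.symm⟩,
    fun a ha => ⟨hnone a ha, hs a ha⟩⟩

end SimpleGraph

section GenericGraph

variable {V : Type*} {T : SimpleGraph V}

def GenericVertex.swap (z : GenericVertex T) : GenericVertex T := ⟨z.1.swap, z.2.symm⟩

variable [DecidableEq V]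

lemma genericGraph_adj_iff (hT : T.IsTree) {a b : GenericVertex T} :
    (genericGraph T).Adj a b ↔ a.1.1 ≠ b.1.1 ∧ a.1.2 = T.nextToward a.1.1 b.1.1 ∧
      b.1.2 = T.nextToward b.1.1 a.1.1 := by
  rw [genericGraph, fromRel_adj, hT.exists_isPath_support_iff, hT.exists_isPath_support_iff]
  constructor
  · rintro ⟨-, h | ⟨hne, h1, h2⟩⟩
    · exact h
    · exact ⟨hne.symm, h2, h1⟩
  · intro h
    exact ⟨fun hab => h.1 (by rw [hab]), Or.inl h⟩

lemma genericGraph_adj_iff_dist (hT : T.IsTree) {a b : GenericVertex T} :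
    (genericGraph T).Adj a b ↔ T.dist b.1.1 a.1.2 < T.dist b.1.1 a.1.1 ∧
      T.dist a.1.1 b.1.2 < T.dist a.1.1 b.1.1 := by
  rw [genericGraph_adj_iff hT, ← hT.eq_nextToward_iff a.2, ← hT.eq_nextToward_iff b.2]
  refine ⟨fun h => h.2, fun h => ⟨fun hab => ?_, h⟩⟩
  have := (hT.eq_nextToward_iff b.2).1 h.2
  rw [hab, dist_self] at this
  exact Nat.not_lt_zero _ this

lemma genericGraph_adj_swap (hT : T.IsTree) (z : GenericVertex T) :
    (genericGraph T).Adj z z.swap := by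
  have h1 := dist_eq_one_iff_adj.2 z.2
  have h2 := dist_eq_one_iff_adj.2 z.2.symm
  rw [genericGraph_adj_iff_dist hT]
  simp [GenericVertex.swap, h1, h2]

lemma head_injOn (hT : T.IsTree) {s : Finset (GenericVertex T)}
    (hs : (genericGraph T).IsIndepFinset s) : Set.InjOn (fun z : GenericVertex T => z.1.2) s := by
  intro a ha b hb (hab : a.1.2 = b.1.2)
  by_contra hne
  have htail : a.1.1 ≠ b.1.1 := fun h => hne (Subtype.ext (Prod.ext h hab))
  refine hs a ha b hb ((genericGraph_adj_iff_dist hT).2 ⟨?_, ?_⟩)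
  · have := hT.dist_eq_dist_add_one_of_adj b.1.1 a.2
    have := (hT.connected.dist_eq_zero_iff (u := b.1.1) (v := a.1.1)).not.2 (Ne.symm htail)
    have := dist_eq_one_iff_adj.2 (hab ▸ b.2 : T.Adj b.1.1 a.1.2)
    omega
  · have := hT.dist_eq_dist_add_one_of_adj a.1.1 b.2
    have := (hT.connected.dist_eq_zero_iff (u := a.1.1) (v := b.1.1)).not.2 htail
    have := dist_eq_one_iff_adj.2 (hab ▸ a.2 : T.Adj a.1.1 b.1.2)
    omega

lemma nextArrow_mem_of_maximal (hT : T.IsTree) {s : Finset (GenericVertex T)}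
    (hs : (genericGraph T).IsIndepFinset s)
    (hmax : ∀ t, (genericGraph T).IsIndepFinset t → s ⊆ t → s = t) {v : V}
    {z : GenericVertex T} (hz : z ∈ s) (hzv : T.dist v z.1.2 < T.dist v z.1.1)
    (hhead : z.1.2 ≠ v) :
    ⟨(z.1.2, T.nextToward z.1.2 v), hT.adj_nextToward hhead⟩ ∈ s := by
  by_contra hy
  obtain ⟨x, hx, hxy⟩ := hs.exists_adj_of_maximal hmax hy
  rw [genericGraph_adj_iff_dist hT] at hxy
  simp only at hxy
  have hwv := hT.dist_nextToward_add_one hhead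
  have hzw : z.1.1 ≠ T.nextToward z.1.2 v := by rintro h; rw [h] at hzv; omega
  have hx1 : T.dist x.1.1 z.1.2 < T.dist x.1.1 z.1.1 := by
    by_contra hle
    have := hT.dist_ne_of_adj x.1.1 z.2
    refine hzw (((hT.eq_nextToward_iff z.2.symm).2 (by omega)).trans
      ((hT.eq_nextToward_iff (hT.adj_nextToward hhead)).2 hxy.2).symm)
  refine hs x hx z hz ((genericGraph_adj_iff_dist hT).2 ⟨?_, hx1⟩)
  by_contra hle
  have := hT.dist_ne_of_adj z.1.1 x.2
  obtain ⟨h1, -⟩ := hT.eq_of_adj_of_dist_lt z.2 x.2 (by omega) hxy.1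
  rw [h1, SimpleGraph.dist_self] at hx1
  exact Nat.not_lt_zero _ hx1

end GenericGraph

section OutTree

variable {V : Type*} [Fintype V] {T : SimpleGraph V} [DecidableRel T.Adj]

variable (T) in
noncomputable def outTree (v : V) : Finset (GenericVertex T) :=
  univ.filter fun z => T.dist v z.1.1 < T.dist v z.1.2

lemma mem_outTree {v : V} {z : GenericVertex T} :
    z ∈ outTree T v ↔ T.dist v z.1.1 < T.dist v z.1.2 := by
  simp [outTree]

variable [DecidableEq V]

lemma outTree_isIndepFinset (hT : T.IsTree) (v : V) :
    (genericGraph T).IsIndepFinset (outTree T v) := by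
  intro a ha b hb hab
  rw [mem_outTree] at ha hb
  rw [genericGraph_adj_iff_dist hT] at hab
  have := hT.dist_eq_of_dist_lt a.2 ha hab.1
  have := hT.dist_eq_of_dist_lt b.2 hb hab.2
  omega

lemma eq_outTree_of_subset (hT : T.IsTree) {v : V} {t : Finset (GenericVertex T)}
    (ht : (genericGraph T).IsIndepFinset t) (hsub : outTree T v ⊆ t) : outTree T v = t := by
  refine hsub.antisymm fun z hz => ?_
  by_contra hzv
  have hswap : z.swap ∈ outTree T v := by
    rw [mem_outTree] at hzv ⊢
    have := hT.dist_ne_of_adj v z.2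
    simp only [GenericVertex.swap, Prod.fst_swap, Prod.snd_swap]
    omega
  exact ht z hz _ (hsub hswap) (genericGraph_adj_swap hT z)

lemma outTree_injective (hT : T.IsTree) : Function.Injective (outTree T) := by
  intro u v huv
  by_contra hne
  have hmem : (⟨(u, T.nextToward u v), hT.adj_nextToward hne⟩ : GenericVertex T) ∈
      outTree T u := by
    rw [mem_outTree, dist_self, dist_eq_one_iff_adj.2 (hT.adj_nextToward hne)]
    exact Nat.one_pos
  rw [huv, mem_outTree] at hmem
  have := hT.dist_nextToward_add_one hne
  simp only at hmem
  omega

lemma outTree_sdiff_outTree (hT : T.IsTree) {w p : V} (h : T.Adj w p) :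
    outTree T w \ outTree T p = {⟨(w, p), h⟩} := by
  ext z
  rw [mem_sdiff, mem_outTree, mem_outTree, mem_singleton]
  constructor
  · rintro ⟨hw, hp⟩
    have := hT.dist_ne_of_adj p z.2
    obtain ⟨rfl, rfl⟩ := hT.eq_of_adj_of_dist_lt h z.2 hw (by omega)
    rfl
  · rintro rfl
    simp [dist_eq_one_iff_adj.2 h, dist_eq_one_iff_adj.2 h.symm]

lemma outTree_shelling_step (hT : T.IsTree) {u w p : V} (h : T.Adj w p)
    (hu : T.dist u p < T.dist u w) :
    #(outTree T w \ outTree T p) = 1 ∧ outTree T u ∩ outTree T w ⊆ outTree T p ∧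
      outTree T p ⊆ outTree T u ∪ outTree T w := by
  refine ⟨by rw [outTree_sdiff_outTree hT h, card_singleton], fun z hz => ?_, fun z hz => ?_⟩
  · rw [mem_inter] at hz
    by_contra hzp
    have hz' := mem_sdiff.2 ⟨hz.2, hzp⟩
    rw [outTree_sdiff_outTree hT h, mem_singleton] at hz'
    have := mem_outTree.1 (hz' ▸ hz.1)
    simp only at this
    omega
  · rw [mem_union, or_iff_not_imp_right]
    intro hzw
    have hz' := mem_sdiff.2 ⟨hz, hzw⟩
    rw [outTree_sdiff_outTree hT h.symm, mem_singleton] at hz'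
    rw [hz', mem_outTree]
    exact hu

lemma card_lt_of_isIndepFinset (hT : T.IsTree) {s : Finset (GenericVertex T)}
    (hs : (genericGraph T).IsIndepFinset s) : #s < Fintype.card V := by
  rw [← hT.card_edgeFinset, Nat.lt_succ_iff]
  refine card_le_card_of_injOn (fun z => s(z.1.1, z.1.2)) (fun z _ => by simpa using z.2) ?_
  intro a ha b hb hab
  rcases Sym2.eq_iff.1 hab with h | ⟨h1, h2⟩
  · exact Subtype.ext (Prod.ext h.1 h.2)
  · have hba : a.swap = b := Subtype.ext (Prod.ext h2 h1)
    exact absurd (genericGraph_adj_swap hT a) (hs a ha _ (hba ▸ hb))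

lemma exists_forall_head_ne (hT : T.IsTree) {s : Finset (GenericVertex T)}
    (hs : (genericGraph T).IsIndepFinset s) : ∃ v, ∀ z ∈ s, z.1.2 ≠ v := by
  have hcard : #(s.image fun z => z.1.2) < #(univ : Finset V) := by
    rw [card_image_of_injOn (head_injOn hT hs), card_univ]
    exact card_lt_of_isIndepFinset hT hs
  obtain ⟨v, -, hv⟩ := exists_mem_notMem_of_card_lt_card hcard
  exact ⟨v, fun z hz hzv => hv (mem_image.2 ⟨z, hz, hzv⟩)⟩

lemma subset_outTree_of_maximal (hT : T.IsTree) {s : Finset (GenericVertex T)}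
    (hs : (genericGraph T).IsIndepFinset s)
    (hmax : ∀ t, (genericGraph T).IsIndepFinset t → s ⊆ t → s = t) {v : V}
    (hv : ∀ z ∈ s, z.1.2 ≠ v) :
    s ⊆ outTree T v := by
  suffices ∀ n, ∀ z ∈ s, T.dist v z.1.2 = n → T.dist v z.1.1 < T.dist v z.1.2 from
    fun z hz => mem_outTree.2 (this _ z hz rfl)
  intro n
  induction n using Nat.strong_induction_on with
  | _ n ih =>
  intro z hz hn
  by_contra hle
  have := hT.dist_ne_of_adj v z.2
  have hstep := nextArrow_mem_of_maximal hT hs hmax hz (by omega) (hv z hz)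
  have := hT.dist_nextToward_add_one (hv z hz)
  have : T.dist v z.1.2 < T.dist v (T.nextToward z.1.2 v) :=
    ih _ (show T.dist v (T.nextToward z.1.2 v) < n by omega) _ hstep rfl
  omega

lemma maximal_isIndepFinset_iff (hT : T.IsTree) {s : Finset (GenericVertex T)} :
    ((genericGraph T).IsIndepFinset s ∧
        ∀ t, (genericGraph T).IsIndepFinset t → s ⊆ t → s = t) ↔
      ∃ v, outTree T v = s := by
  constructor
  · rintro ⟨hs, hmax⟩
    obtain ⟨v, hv⟩ := exists_forall_head_ne hT hs
    exact ⟨v, (hmax _ (outTree_isIndepFinset hT v)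
      (subset_outTree_of_maximal hT hs hmax hv)).symm⟩
  · rintro ⟨v, rfl⟩
    exact ⟨outTree_isIndepFinset hT v, fun t ht hsub => eq_outTree_of_subset hT ht hsub⟩

theorem stronglyShellable_image_outTree (hT : T.IsTree) :
    StronglyShellable (univ.image (outTree T)) := by
  obtain ⟨r⟩ := hT.connected.nonempty
  obtain ⟨ρ, hρ, hρr⟩ := exists_injective_rank (T.dist r)
  refine stronglyShellable_image_of_rank (outTree_injective hT) hρ fun u w huw => ?_
  have hle : T.dist r u ≤ T.dist r w := not_lt.1 fun h => (hρr _ _ h).not_gt huw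
  have huw' : u ≠ w := ne_of_apply_ne ρ huw.ne
  have hwr : w ≠ r := by
    rintro rfl
    rw [SimpleGraph.dist_self, Nat.le_zero, hT.connected.dist_eq_zero_iff] at hle
    exact huw' hle.symm
  refine ⟨T.nextToward w r, hρr _ _ (by have := hT.dist_nextToward_add_one hwr; omega),
    outTree_shelling_step hT (hT.adj_nextToward hwr) ?_⟩
  rw [← hT.nextToward_eq_of_dist_le huw' hle]
  have := hT.dist_nextToward_add_one huw'.symm
  omega

end OutTree

section Edges

variable {V : Type*} [Fintype V] [DecidableEq V] {T : SimpleGraph V} [DecidableRel T.Adj]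

variable (T) in
noncomputable def genericEdge (x y : V) : Finset (GenericVertex T) :=
  univ.filter fun z => z.1 = (x, T.nextToward x y) ∨ z.1 = (y, T.nextToward y x)

lemma mem_genericEdge {x y : V} {z : GenericVertex T} :
    z ∈ genericEdge T x y ↔ z.1 = (x, T.nextToward x y) ∨ z.1 = (y, T.nextToward y x) := by
  simp [genericEdge]

lemma genericEdge_comm (x y : V) : genericEdge T x y = genericEdge T y x := by
  ext z
  rw [mem_genericEdge, mem_genericEdge, or_comm]

lemma genericEdge_eq_pair (hT : T.IsTree) {x y : V} (h : x ≠ y) :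
    genericEdge T x y =
      {⟨(x, T.nextToward x y), hT.adj_nextToward h⟩,
        ⟨(y, T.nextToward y x), hT.adj_nextToward h.symm⟩} := by
  ext z
  rw [mem_genericEdge, mem_insert, mem_singleton, Subtype.ext_iff, Subtype.ext_iff]

lemma card_genericEdge (hT : T.IsTree) {x y : V} (h : x ≠ y) : #(genericEdge T x y) = 2 := by
  rw [genericEdge_eq_pair hT h, card_pair]
  intro he
  exact h (congrArg (fun z : GenericVertex T => z.1.1) he)

lemma mem_edgeSets_genericGraph (hT : T.IsTree) {e : Finset (GenericVertex T)} :
    e ∈ edgeSets (genericGraph T) ↔ ∃ x y, x ≠ y ∧ genericEdge T x y = e := by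
  simp only [edgeSets, mem_image, mem_edgeFinset]
  constructor
  · rintro ⟨E, hE, rfl⟩
    induction E using Sym2.ind with
    | _ a b =>
    obtain ⟨hne, ha, hb⟩ := (genericGraph_adj_iff hT (a := a) (b := b)).1 hE
    refine ⟨a.1.1, b.1.1, hne, ?_⟩
    rw [genericEdge_eq_pair hT hne]
    have ea : (⟨(a.1.1, T.nextToward a.1.1 b.1.1), hT.adj_nextToward hne⟩ : GenericVertex T) =
        a := Subtype.ext (Prod.ext rfl ha.symm)
    have eb : (⟨(b.1.1, T.nextToward b.1.1 a.1.1), hT.adj_nextToward hne.symm⟩ :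
        GenericVertex T) = b := Subtype.ext (Prod.ext rfl hb.symm)
    rw [ea, eb]
    rfl
  · rintro ⟨x, y, hxy, rfl⟩
    refine ⟨s(⟨(x, T.nextToward x y), hT.adj_nextToward hxy⟩,
      ⟨(y, T.nextToward y x), hT.adj_nextToward hxy.symm⟩), ?_, ?_⟩
    · exact (genericGraph_adj_iff hT).2 ⟨hxy, rfl, rfl⟩
    · rw [genericEdge_eq_pair hT hxy]
      rfl

lemma genericEdge_inj (hT : T.IsTree) {x y x' y' : V} (hxy : x ≠ y)
    (h : genericEdge T x y = genericEdge T x' y') :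
    (x = x' ∧ y = y') ∨ (x = y' ∧ y = x') := by
  have hx : x = x' ∨ x = y' := by
    have hmem : (⟨(x, T.nextToward x y), hT.adj_nextToward hxy⟩ : GenericVertex T) ∈
        genericEdge T x' y' := by
      rw [← h, mem_genericEdge]
      exact Or.inl rfl
    exact (mem_genericEdge.1 hmem).imp (congrArg Prod.fst) (congrArg Prod.fst)
  have hy : y = x' ∨ y = y' := by
    have hmem : (⟨(y, T.nextToward y x), hT.adj_nextToward hxy.symm⟩ : GenericVertex T) ∈
        genericEdge T x' y' := by
      rw [← h, mem_genericEdge]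
      exact Or.inr rfl
    exact (mem_genericEdge.1 hmem).imp (congrArg Prod.fst) (congrArg Prod.fst)
  rcases hx with rfl | rfl <;> rcases hy with rfl | rfl <;> simp_all

lemma genericEdge_shelling_step (hT : T.IsTree) {u a x y : V} (huy : u ≠ y)
    (hxy : x ≠ y) (hu : T.nextToward u x = T.nextToward u a)
    (hx : T.nextToward x u = T.nextToward x y) :
    #(genericEdge T x y \ genericEdge T u x) = 1 ∧
      genericEdge T u x ⊆ genericEdge T u a ∪ genericEdge T x y := by
  constructor
  · rw [card_eq_one]
    refine ⟨⟨(y, T.nextToward y x), hT.adj_nextToward hxy.symm⟩, ?_⟩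
    ext z
    simp only [mem_sdiff, mem_genericEdge, mem_singleton, Subtype.ext_iff, hu, hx]
    constructor
    · rintro ⟨h | h, hn⟩
      · exact absurd (Or.inr h) hn
      · exact h
    · intro h
      refine ⟨Or.inr h, ?_⟩
      rintro (h' | h') <;> rw [h, Prod.ext_iff] at h'
      · exact huy h'.1.symm
      · exact hxy h'.1.symm
  · intro z hz
    rw [mem_genericEdge, hu, hx] at hz
    rw [mem_union, mem_genericEdge, mem_genericEdge]
    tauto

lemma genericEdge_inter_nonempty (hT : T.IsTree) (r : V) {u a y : V} (hau : a ≠ u) (hyu : y ≠ u)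
    (ha : T.dist r a ≤ T.dist r u) (hy : T.dist r y ≤ T.dist r u) :
    (genericEdge T u a ∩ genericEdge T u y).Nonempty := by
  refine ⟨⟨(u, T.nextToward u a), hT.adj_nextToward hau.symm⟩, ?_⟩
  rw [mem_inter, mem_genericEdge, mem_genericEdge]
  refine ⟨Or.inl rfl, Or.inl ?_⟩
  show (u, T.nextToward u a) = (u, T.nextToward u y)
  rw [hT.nextToward_eq_of_dist_le hau ha, hT.nextToward_eq_of_dist_le hyu hy]

lemma exists_genericEdge_shelling (hT : T.IsTree) (r : V) {u a x y : V} (hau : a ≠ u)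
    (ha : T.dist r a ≤ T.dist r u) (hx : T.dist r x ≤ T.dist r u)
    (hy : T.dist r y ≤ T.dist r u) (hux : u ≠ x) (huy : u ≠ y) (hxy : x ≠ y) :
    ∃ c, (c = x ∨ c = y) ∧ #(genericEdge T x y \ genericEdge T u c) = 1 ∧
      genericEdge T u c ⊆ genericEdge T u a ∪ genericEdge T x y := by
  have hua := hT.nextToward_eq_of_dist_le hau ha
  rcases hT.nextToward_eq_or hxy u with h | h
  · exact ⟨x, Or.inl rfl, genericEdge_shelling_step hT huy hxy
      ((hT.nextToward_eq_of_dist_le hux.symm hx).trans hua.symm) h⟩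
  · refine ⟨y, Or.inr rfl, ?_⟩
    rw [genericEdge_comm x y]
    exact genericEdge_shelling_step hT hux hxy.symm
      ((hT.nextToward_eq_of_dist_le huy.symm hy).trans hua.symm) h

lemma edgeSets_genericGraph_eq_image (hT : T.IsTree) {β : Type*} [LinearOrder β] {ρ : V → β}
    (hρ : Function.Injective ρ) : edgeSets (genericGraph T) =
      univ.image fun p : {p : V × V // ρ p.2 < ρ p.1} => genericEdge T p.1.1 p.1.2 := by
  ext e
  rw [mem_edgeSets_genericGraph hT, mem_image]
  constructor
  · rintro ⟨x, y, hxy, rfl⟩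
    rcases lt_or_gt_of_ne (hρ.ne hxy) with h | h
    · exact ⟨⟨(y, x), h⟩, mem_univ _, genericEdge_comm y x⟩
    · exact ⟨⟨(x, y), h⟩, mem_univ _, rfl⟩
  · rintro ⟨p, -, rfl⟩
    exact ⟨p.1.1, p.1.2, fun h => (h ▸ p.2).false, rfl⟩

lemma genericEdge_injective (hT : T.IsTree) {β : Type*} [LinearOrder β] (ρ : V → β) :
    Function.Injective fun p : {p : V × V // ρ p.2 < ρ p.1} => genericEdge T p.1.1 p.1.2 := by
  rintro ⟨⟨x, y⟩, hxy⟩ ⟨⟨x', y'⟩, hxy'⟩ h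
  rcases genericEdge_inj hT (fun h => (h ▸ hxy).false) h with ⟨rfl, rfl⟩ | ⟨rfl, rfl⟩
  · rfl
  · exact (lt_asymm hxy hxy').elim

theorem stronglyShellable_edgeSets_genericGraph (hT : T.IsTree) :
    StronglyShellable (edgeSets (genericGraph T)) := by
  obtain ⟨r⟩ := hT.connected.nonempty
  obtain ⟨ρ, hρ, hρr⟩ := exists_injective_rank (T.dist r)
  have hle {u w : V} (h : ρ u < ρ w) : T.dist r u ≤ T.dist r w :=
    not_lt.1 fun h' => (hρr _ _ h').not_gt h
  rw [edgeSets_genericGraph_eq_image hT hρ]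
  -- edges are listed by decreasing rank of their farther endpoint
  refine stronglyShellable_image_of_rank (genericEdge_injective hT ρ)
    (ρ := fun p => toLex (OrderDual.toDual (ρ p.1.1), ρ p.1.2)) ?_ ?_
  · rintro ⟨⟨x, y⟩, hxy⟩ ⟨⟨x', y'⟩, hxy'⟩ h
    simp only [toLex_inj, Prod.mk.injEq, OrderDual.toDual_inj] at h
    obtain ⟨rfl, rfl⟩ : x = x' ∧ y = y' := ⟨hρ h.1, hρ h.2⟩
    rfl
  rintro ⟨⟨u, a⟩, hau⟩ ⟨⟨x, y⟩, hyx⟩ hlt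
  simp only [Prod.Lex.toLex_lt_toLex, OrderDual.toDual_lt_toDual] at hlt ⊢
  dsimp only at hau hyx
  have hau' : a ≠ u := ne_of_apply_ne ρ hau.ne
  have hyx' : y ≠ x := ne_of_apply_ne ρ hyx.ne
  by_cases hint : (genericEdge T u a ∩ genericEdge T x y).Nonempty
  · have hne : genericEdge T u a ≠ genericEdge T x y := fun h => by
      obtain ⟨rfl, rfl⟩ := Prod.ext_iff.1 (congrArg Subtype.val
        (genericEdge_injective hT ρ (a₁ := ⟨(u, a), hau⟩) (a₂ := ⟨(x, y), hyx⟩) h))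
      simp at hlt
    exact ⟨⟨(u, a), hau⟩, hlt, Finset.card_sdiff_eq_one_of_card_eq_two
      (card_genericEdge hT hau'.symm) (card_genericEdge hT hyx'.symm) hne hint,
      inter_subset_left, subset_union_left⟩
  have hux : u ≠ x := by
    rintro rfl
    exact hint (genericEdge_inter_nonempty hT r hau' hyx' (hle hau) (hle hyx))
  have hxu : ρ x < ρ u := hlt.resolve_right fun h => hux (hρ h.1)
  obtain ⟨c, hc, hcard, hsub⟩ := exists_genericEdge_shelling hT r hau' (hle hau)
    (hle hxu) (hle (hyx.trans hxu)) hux (ne_of_apply_ne ρ (hyx.trans hxu).ne') hyx'.symm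
  have hcu : ρ c < ρ u := by rcases hc with rfl | rfl <;> [exact hxu; exact hyx.trans hxu]
  refine ⟨⟨(u, c), hcu⟩, Or.inl hxu, hcard, ?_, hsub⟩
  rw [not_nonempty_iff_eq_empty.1 hint]
  exact empty_subset _

end Edges

/-- For any tree T, the independence complex of the generic graph G_T is strongly shellable
(its facets are the maximal independent sets); together with G_T being ESS, G_T is
bi-strongly shellable. -/
theorem stmt15 {V : Type*} [Fintype V] [DecidableEq V] (T : SimpleGraph V) [DecidableRel T.Adj]
    (hT : T.IsTree) :
    StronglyShellable (Finset.univ.filter fun s : Finset (GenericVertex T) =>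
        (∀ a ∈ s, ∀ b ∈ s, ¬ (genericGraph T).Adj a b) ∧
        (∀ t : Finset (GenericVertex T),
          (∀ a ∈ t, ∀ b ∈ t, ¬ (genericGraph T).Adj a b) → s ⊆ t → s = t)) ∧
    StronglyShellable (edgeSets (genericGraph T)) := by
  refine ⟨?_, stronglyShellable_edgeSets_genericGraph hT⟩
  convert stronglyShellable_image_outTree hT using 1
  ext s
  simp only [mem_filter, mem_univ, true_and, mem_image]
  exact maximal_isIndepFinset_iff hT
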